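/- arXiv:2002.01305 — 2 statements merged into one kernel-verified Lean document; each statement's English description precedes it below -/
import Mathlib

section
/- Let K be a finite index set and let (A_k)_{k∈K} and (Â_k)_{k∈K} be families of n × m real matrices. Then ‖ ∑_{k∈K} ( Â_k Â_kᵀ − A_k A_kᵀ ) ‖₂ ≤ ∑_{k∈K} ‖Â_k − A_k‖₂² + 2 ( ∑_{k∈K} ‖A_k‖₂² )^{1/2} ( ∑_{k∈K} ‖Â_k − A_k‖₂² )^{1/2}. -/
/-!
Writing `E k = Â k - A k`, each summand expands as `E Eᵀ + A Eᵀ + E Aᵀ`; since the spectral norm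
is submultiplicative and invariant under transposition, its norm is at most
`‖E k‖² + 2 ‖A k‖ ‖E k‖`. Summing over `k` and applying Cauchy–Schwarz to `∑ ‖A k‖ ‖E k‖` gives
the bound.
-/

open Matrix

/-- The spectral norm of a real matrix: the operator norm of the associated
linear map between Euclidean spaces, i.e. the largest singular value. -/
noncomputable def matSpectralNorm {m n : Type*} [Fintype m] [Fintype n] [DecidableEq n]
    (M : Matrix m n ℝ) : ℝ :=
  ‖LinearMap.toContinuousLinearMap (Matrix.toEuclideanLin M)‖

open scoped Matrix.Norms.L2Operator

theorem matSpectralNorm_eq_l2_opNorm {m n : Type*} [Fintype m] [Fintype n] [DecidableEq n]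
    (M : Matrix m n ℝ) : matSpectralNorm M = ‖M‖ :=
  rfl

namespace Matrix

theorem mul_conjTranspose_sub_mul_conjTranspose {α : Type*} [Ring α] [StarRing α]
    {m n : Type*} [Fintype n] (X Y : Matrix m n α) :
    X * Xᴴ - Y * Yᴴ = (X - Y) * (X - Y)ᴴ + Y * (X - Y)ᴴ + (X - Y) * Yᴴ := by
  simp only [conjTranspose_sub, Matrix.mul_sub, Matrix.sub_mul]
  abel

theorem l2_opNorm_mul_conjTranspose_sub_le {𝕜 : Type*} [RCLike 𝕜] {m n : Type*}
    [Fintype m] [Fintype n] [DecidableEq m] [DecidableEq n] (X Y : Matrix m n 𝕜) :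
    ‖X * Xᴴ - Y * Yᴴ‖ ≤ ‖X - Y‖ ^ 2 + 2 * (‖Y‖ * ‖X - Y‖) := by
  rw [mul_conjTranspose_sub_mul_conjTranspose]
  calc ‖(X - Y) * (X - Y)ᴴ + Y * (X - Y)ᴴ + (X - Y) * Yᴴ‖
      ≤ ‖(X - Y) * (X - Y)ᴴ‖ + ‖Y * (X - Y)ᴴ‖ + ‖(X - Y) * Yᴴ‖ := norm_add₃_le
    _ ≤ ‖X - Y‖ * ‖(X - Y)ᴴ‖ + ‖Y‖ * ‖(X - Y)ᴴ‖ + ‖X - Y‖ * ‖Yᴴ‖ := by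
      gcongr <;> exact l2_opNorm_mul _ _
    _ = ‖X - Y‖ ^ 2 + 2 * (‖Y‖ * ‖X - Y‖) := by
      rw [l2_opNorm_conjTranspose, l2_opNorm_conjTranspose]
      ring

end Matrix

theorem spectral_norm_sum_outer_diff_bound
    (K : Type*) [Fintype K] (n m : ℕ)
    (A Ahat : K → Matrix (Fin n) (Fin m) ℝ) :
    matSpectralNorm (∑ k : K, (Ahat k * (Ahat k)ᵀ - A k * (A k)ᵀ)) ≤
      (∑ k : K, matSpectralNorm (Ahat k - A k) ^ 2) +
        2 * Real.sqrt (∑ k : K, matSpectralNorm (A k) ^ 2) *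
          Real.sqrt (∑ k : K, matSpectralNorm (Ahat k - A k) ^ 2) := by
  simp only [matSpectralNorm_eq_l2_opNorm, ← conjTranspose_eq_transpose_of_trivial]
  calc ‖∑ k, (Ahat k * (Ahat k)ᴴ - A k * (A k)ᴴ)‖
      ≤ ∑ k, (‖Ahat k - A k‖ ^ 2 + 2 * (‖A k‖ * ‖Ahat k - A k‖)) :=
        (norm_sum_le _ _).trans
          (Finset.sum_le_sum fun k _ => l2_opNorm_mul_conjTranspose_sub_le _ _)
    _ = ∑ k, ‖Ahat k - A k‖ ^ 2 + 2 * ∑ k, ‖A k‖ * ‖Ahat k - A k‖ := by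
      rw [Finset.sum_add_distrib, Finset.mul_sum]
    _ ≤ ∑ k, ‖Ahat k - A k‖ ^ 2 + 2 * √(∑ k, ‖A k‖ ^ 2) * √(∑ k, ‖Ahat k - A k‖ ^ 2) := by
      rw [mul_assoc]
      gcongr
      exact Real.sum_mul_le_sqrt_mul_sqrt _ _ _
end

section
/- Let U and V be linear subspaces of the Euclidean space ℝⁿ and let P_U and P_V denote the orthogonal projections of ℝⁿ onto U and V respectively, viewed as linear endomorphisms of ℝⁿ. Then tr(P_U ∘ P_V) = 0 if and only if U and V are orthogonal, i.e. ⟨u, v⟩ = 0 for every u ∈ U and v ∈ V. Consequently, the space distance D(U, V) = (1 − tr(P_U ∘ P_V)/max(dim U, dim V))^{1/2} equals 1 if and only if U ⟂ V. -/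
open Module

/-- The orthogonal projection onto a subspace of Euclidean space, as a linear
endomorphism of the ambient space. -/
noncomputable def projOn {n : ℕ} (U : Submodule ℝ (EuclideanSpace ℝ (Fin n))) :
    EuclideanSpace ℝ (Fin n) →ₗ[ℝ] EuclideanSpace ℝ (Fin n) :=
  U.subtype ∘ₗ (U.orthogonalProjectionOnto).toLinearMap

/-! Since `P_U` and `P_V` are idempotent and self-adjoint, cyclicity of the trace gives
`tr (P_U P_V) = tr ((P_V P_U)* (P_V P_U)) = ∑ ‖P_V P_U eᵢ‖²` for any orthonormal basis `(eᵢ)`.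
This sum of squares vanishes iff `P_V P_U = 0`, i.e. iff `V ⟂ U`. -/

open scoped InnerProductSpace

namespace Submodule

variable {𝕜 E : Type*} [RCLike 𝕜] [NormedAddCommGroup E] [InnerProductSpace 𝕜 E]
  [FiniteDimensional 𝕜 E]

theorem trace_starProjection_comp_starProjection_eq_sum_norm_sq {ι : Type*} [Fintype ι]
    (U V : Submodule 𝕜 E) (b : OrthonormalBasis ι 𝕜 E) :
    LinearMap.trace 𝕜 E ((U.starProjection : E →ₗ[𝕜] E) ∘ₗ (V.starProjection : E →ₗ[𝕜] E)) =
      ((∑ i, ‖V.starProjection (U.starProjection (b i))‖ ^ 2 : ℝ) : 𝕜) := by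
  set P : E →ₗ[𝕜] E := ↑U.starProjection
  set Q : E →ₗ[𝕜] E := ↑V.starProjection
  have hP : P ∘ₗ P = P :=
    congrArg ContinuousLinearMap.toLinearMap U.isIdempotentElem_starProjection
  have hQ : Q ∘ₗ Q = Q :=
    congrArg ContinuousLinearMap.toLinearMap V.isIdempotentElem_starProjection
  have hcyc : LinearMap.trace 𝕜 E (P ∘ₗ Q) = LinearMap.trace 𝕜 E (P ∘ₗ Q ∘ₗ Q ∘ₗ P) := calc
    _ = LinearMap.trace 𝕜 E (P ∘ₗ (P ∘ₗ Q ∘ₗ Q)) := by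
      rw [hQ, ← LinearMap.comp_assoc, hP]
    _ = LinearMap.trace 𝕜 E ((P ∘ₗ Q ∘ₗ Q) ∘ₗ P) := LinearMap.trace_comp_comm' _ _
    _ = _ := by simp only [LinearMap.comp_assoc]
  rw [hcyc, LinearMap.trace_eq_sum_inner _ b]
  push_cast
  refine Finset.sum_congr rfl fun i _ => ?_
  simp only [P, Q, ContinuousLinearMap.coe_coe, Function.comp_apply]
  rw [← U.inner_starProjection_left_eq_right, ← V.inner_starProjection_left_eq_right,
    inner_self_eq_norm_sq_to_K]

theorem trace_starProjection_comp_starProjection_eq_zero_iff (U V : Submodule 𝕜 E) :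
    LinearMap.trace 𝕜 E ((U.starProjection : E →ₗ[𝕜] E) ∘ₗ (V.starProjection : E →ₗ[𝕜] E)) = 0 ↔
      U ⟂ V := by
  set b := stdOrthonormalBasis 𝕜 E
  rw [trace_starProjection_comp_starProjection_eq_sum_norm_sq U V b, RCLike.ofReal_eq_zero,
    Finset.sum_eq_zero_iff_of_nonneg fun _ _ => by positivity, isOrtho_comm,
    ← starProjection_comp_starProjection_eq_zero_iff]
  simp only [Finset.mem_univ, true_implies, pow_eq_zero_iff two_ne_zero, norm_eq_zero]
  constructor
  · intro h
    exact ContinuousLinearMap.coe_injective (b.toBasis.ext fun i => by simpa using h i)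
  · intro h i
    simpa using congrArg (· (b i)) h

end Submodule

theorem trace_comp_orthogonal_projections_eq_zero_iff
    (n : ℕ) (U V : Submodule ℝ (EuclideanSpace ℝ (Fin n))) :
    (LinearMap.trace ℝ _ (projOn U ∘ₗ projOn V) = 0 ↔
      ∀ u ∈ U, ∀ v ∈ V, inner ℝ u v = (0 : ℝ)) ∧
    (Real.sqrt (1 - LinearMap.trace ℝ _ (projOn U ∘ₗ projOn V) /
        (max (finrank ℝ U) (finrank ℝ V) : ℝ)) = 1 ↔
      ∀ u ∈ U, ∀ v ∈ V, inner ℝ u v = (0 : ℝ)) := by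
  have htrace : LinearMap.trace ℝ _ (projOn U ∘ₗ projOn V) = 0 ↔ U ⟂ V :=
    U.trace_starProjection_comp_starProjection_eq_zero_iff V
  rw [← Submodule.isOrtho_iff_inner_eq]
  refine ⟨htrace, ?_⟩
  rw [Real.sqrt_eq_one, sub_eq_self, div_eq_zero_iff, htrace, or_iff_left_iff_imp]
  -- a zero denominator makes the quotient vanish, but only when `U = ⊥`
  intro hmax
  have hmax' : max (finrank ℝ U) (finrank ℝ V) = 0 := by exact_mod_cast hmax
  have hU : U = ⊥ := Submodule.finrank_eq_zero.1 (Nat.max_eq_zero_iff.1 hmax').1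
  exact hU ▸ Submodule.isOrtho_bot_left
end
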